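/- If a level of an LSM tree stores records sorted by key, and a non-membership proof for key k consists of two adjacent records (in the sorted order of the level) with keys k1 < k < k2 together with valid Merkle authentication paths at consecutive positions j and j+1, then either the level contains no record with key k, or a hash collision can be extracted. -/

import Mathlib

def HashCollision {α : Type*} (H : α → α) : Prop :=
  ∃ x y, x ≠ y ∧ H x = H y

def merkleRoot {α : Type*} [Inhabited α] (H : α → α) (pair : α → α → α) :
    ℕ → List α → α
  | 0, l => H (l.headD default)
  | d + 1, l => H (pair (merkleRoot H pair d (l.take (2 ^ d)))
                        (merkleRoot H pair d (l.drop (2 ^ d))))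

def pathRoot {α : Type*} (H : α → α) (pair : α → α → α) :
    α → ℕ → List α → α
  | h, _, [] => h
  | h, i, s :: rest =>
      pathRoot H pair (if i % 2 = 1 then H (pair s h) else H (pair h s))
        (i / 2) rest

def verifyPath {α : Type*} (H : α → α) (pair : α → α → α)
    (v : α) (i : ℕ) (sibs : List α) : α :=
  pathRoot H pair (H v) i sibs

lemma pathRoot_append {α : Type*} (H : α → α) (pair : α → α → α) :
    ∀ (l1 l2 : List α) (h : α) (i : ℕ),
      pathRoot H pair h i (l1 ++ l2) =
        pathRoot H pair (pathRoot H pair h i l1) (i / 2 ^ l1.length) l2 := by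
  intro l1
  induction l1 with
  | nil => intro l2 h i; simp [pathRoot]
  | cons s rest ih =>
      intro l2 h i
      simp only [List.cons_append, pathRoot, List.append_eq]
      rw [ih]
      have : i / 2 / 2 ^ rest.length = i / 2 ^ (s :: rest).length := by
        rw [Nat.div_div_eq_div_mul, List.length_cons, pow_succ, mul_comm]
      rw [this]

lemma pathRoot_mod {α : Type*} (H : α → α) (pair : α → α → α) :
    ∀ (l : List α) (h : α) (i : ℕ),
      pathRoot H pair h (i % 2 ^ l.length) l = pathRoot H pair h i l := by
  intro l
  induction l with
  | nil => intro h i; simp [pathRoot]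
  | cons s rest ih =>
      intro h i
      simp only [pathRoot, List.length_cons]
      have h1 : i % 2 ^ (rest.length + 1) % 2 = i % 2 := by
        rw [Nat.mod_mod_of_dvd _ (dvd_pow_self 2 (Nat.succ_ne_zero _))]
      have h2 : i % 2 ^ (rest.length + 1) / 2 = i / 2 % 2 ^ rest.length := by
        rw [pow_succ, mul_comm, Nat.mod_mul_right_div_self]
      simp only [h1, h2, ih]

lemma path_sound {α : Type*} [Inhabited α]
    (H : α → α) (pair : α → α → α) (hpair : Function.Injective2 pair) :
    ∀ (d : ℕ) (recs sibs : List α) (h : α) (i : ℕ),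
      recs.length = 2 ^ d → sibs.length = d → i < 2 ^ d →
      pathRoot H pair h i sibs = merkleRoot H pair d recs →
      h = H (recs.getD i default) ∨ HashCollision H := by
  intro d
  induction d with
  | zero =>
      intro recs sibs h i hlen hs hi heq
      interval_cases i
      rw [List.length_eq_zero_iff] at hs
      subst hs
      simp only [pathRoot, merkleRoot] at heq
      left
      rw [heq]
      congr 1
      cases recs with
      | nil => simp at hlen
      | cons a t => simp
  | succ d ih =>
      intro recs sibs h i hlen hs hi heq
      rcases sibs.eq_nil_or_concat with rfl | ⟨l1, s, rfl⟩
      · simp at hs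
      · rw [List.concat_eq_append] at heq hs
        have hl1 : l1.length = d := by simpa using hs
        rw [pathRoot_append, hl1] at heq
        set p := pathRoot H pair h i l1 with hp
        set L := merkleRoot H pair d (recs.take (2 ^ d)) with hL
        set R := merkleRoot H pair d (recs.drop (2 ^ d)) with hR
        have hmr : merkleRoot H pair (d + 1) recs = H (pair L R) := rfl
        have hlt : recs.length = 2 ^ (d + 1) := hlen
        have hidiv : i / 2 ^ d < 2 := by
          rw [Nat.div_lt_iff_lt_mul (Nat.two_pow_pos d)]
          rw [pow_succ] at hi; omega
        have htake : (recs.take (2 ^ d)).length = 2 ^ d := by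
          rw [List.length_take, hlt, pow_succ]; omega
        have hdrop : (recs.drop (2 ^ d)).length = 2 ^ d := by
          rw [List.length_drop, hlt, pow_succ]; omega
        interval_cases hcase : (i / 2 ^ d)
        · -- left subtree
          have hi' : i < 2 ^ d := by
            have h0 := Nat.mod_lt i (Nat.two_pow_pos d)
            have h1 := Nat.div_add_mod i (2 ^ d)
            rw [hcase] at h1
            omega
          simp only [pathRoot, Nat.mod_self, hmr] at heq
          norm_num at heq
          by_cases hcol : pair p s = pair L R
          · obtain ⟨hpL, hsR⟩ := hpair hcol
            have := ih (recs.take (2 ^ d)) l1 h i htake hl1 hi' (hp ▸ hpL ▸ rfl)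
            rcases this with hgood | hcoll
            · left
              rw [hgood]
              congr 1
              rw [List.getD_eq_getElem _ _ (by omega : i < (recs.take (2 ^ d)).length),
                  List.getD_eq_getElem _ _ (by omega : i < recs.length),
                  List.getElem_take]
            · right; exact hcoll
          · right; exact ⟨_, _, hcol, heq⟩
        · -- right subtree
          have hi' : i % 2 ^ d < 2 ^ d := Nat.mod_lt _ (Nat.two_pow_pos d)
          have hisum : i = 2 ^ d + i % 2 ^ d := by
            have h1 := Nat.div_add_mod i (2 ^ d)
            rw [hcase] at h1
            omega
          simp only [pathRoot, hmr] at heq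
          norm_num at heq
          by_cases hcol : pair s p = pair L R
          · obtain ⟨hsL, hpR⟩ := hpair hcol
            have hpath : pathRoot H pair h (i % 2 ^ d) l1 = R := by
              have hmm := pathRoot_mod H pair l1 h i
              rw [hl1] at hmm
              rw [hmm, ← hp]
              exact hpR
            have := ih (recs.drop (2 ^ d)) l1 h (i % 2 ^ d) hdrop hl1 hi' (hR ▸ hpath)
            rcases this with hgood | hcoll
            · left
              rw [hgood]
              congr 1
              rw [List.getD_eq_getElem _ _ (by omega : i % 2 ^ d < (recs.drop (2 ^ d)).length),
                  List.getD_eq_getElem _ _ (by rw [hlt, pow_succ]; omega : i < recs.length),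
                  List.getElem_drop]
              congr 1
              omega
            · right; exact hcoll
          · right; exact ⟨_, _, hcol, heq⟩

/-- Soundness of non-membership proofs: for a level of records sorted strictly
increasing by key, if two records with keys `k1 < k < k2` are authenticated at
consecutive leaf positions `j` and `j+1` against the level's Merkle root, then
the level contains no record of key `k`, or a hash collision can be extracted. -/
theorem nonmembership_proof_soundness {α : Type*} [Inhabited α]
    (H : α → α) (pair : α → α → α) (hpair : Function.Injective2 pair)
    (key : α → ℕ) (d : ℕ) (recs : List α)
    (hlen : recs.length = 2 ^ d)
    (hsorted : recs.Pairwise (fun a b => key a < key b))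
    (k : ℕ) (x y : α) (j : ℕ) (hj : j + 1 < 2 ^ d)
    (sib1 sib2 : List α) (hs1 : sib1.length = d) (hs2 : sib2.length = d)
    (hx : verifyPath H pair x j sib1 = merkleRoot H pair d recs)
    (hy : verifyPath H pair y (j + 1) sib2 = merkleRoot H pair d recs)
    (hk1 : key x < k) (hk2 : k < key y) :
    (∀ r ∈ recs, key r ≠ k) ∨ HashCollision H := by
  have hjx := path_sound H pair hpair d recs sib1 (H x) j hlen hs1 (by omega) hx
  have hjy := path_sound H pair hpair d recs sib2 (H y) (j + 1) hlen hs2 hj hy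
  rcases hjx with hjx | hc
  · rcases hjy with hjy | hc
    · by_cases hxe : x = recs.getD j default
      · by_cases hye : y = recs.getD (j + 1) default
        · left
          intro r hr hkr
          obtain ⟨m, hm, rfl⟩ := List.getElem_of_mem hr
          have hmono : ∀ a b, a < b → (ha : a < recs.length) → (hb : b < recs.length) →
              key recs[a] < key recs[b] := by
            intro a b hab ha hb
            exact List.pairwise_iff_getElem.mp hsorted a b ha hb hab
          have hjlt : j < recs.length := by omega
          have hj1lt : j + 1 < recs.length := by omega
          have hxj : x = recs[j] := by
            rw [hxe, List.getD_eq_getElem _ _ hjlt]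
          have hyj : y = recs[j + 1] := by
            rw [hye, List.getD_eq_getElem _ _ hj1lt]
          rcases lt_trichotomy m j with hmj | rfl | hmj
          · have := hmono m j hmj hm hjlt
            rw [← hxj] at this; omega
          · rw [← hxj] at hkr; omega
          · rcases Nat.lt_or_ge m (j + 1) with h1 | h1
            · have : m = j := by omega
              omega
            · rcases Nat.eq_or_lt_of_le h1 with rfl | h2
              · rw [← hyj] at hkr; omega
              · have := hmono (j + 1) m h2 hj1lt hm
                rw [← hyj] at this; omega
        · right; exact ⟨_, _, hye, hjy⟩
      · right; exact ⟨_, _, hxe, hjx⟩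
    · right; exact hc
  · right; exact hc
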